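/- arXiv:1904.12506 — 4 statements merged into one kernel-verified Lean document; each statement's English description precedes it below -/
import Mathlib

section
/- Let m > n > 1 be integers. For k ∈ ℕ let A_k = {x ∈ ℝ : D_{m^k}(x) ⊄ D_{n^k}(x)}. Suppose μ is a Borel probability measure on [0,1] that is pointwise generic under T_n for a continuous (non-atomic) measure ρ. Then for μ-almost every x, the set {k ∈ ℕ : x ∈ A_k} has natural density zero. -/
open MeasureTheory Filter Set Topology
open scoped ENNReal

/-- `T_n x = n x mod 1` as a self-map of `[0,1) ⊆ ℝ`. -/
noncomputable def Tmap (n : ℕ) (x : ℝ) : ℝ := Int.fract (n * x)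

/-- `μ` is pointwise generic for `ρ` under `T`. -/
def PointwiseGeneric (μ : Measure ℝ) (T : ℝ → ℝ) (ρ : Measure ℝ) : Prop :=
  ∀ᵐ x ∂μ, ∀ f : BoundedContinuousFunction ℝ ℝ,
    Tendsto (fun N : ℕ => (1 / N : ℝ) * ∑ k ∈ Finset.range N, f (T^[k] x)) atTop
      (𝓝 (∫ y, f y ∂ρ))

open Classical in
/-- A set of natural numbers has natural density zero. -/
def HasDensityZero (S : Set ℕ) : Prop :=
  Tendsto (fun N : ℕ => (((Finset.Icc 1 N).filter (fun k => k ∈ S)).card : ℝ) / N)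
    atTop (𝓝 0)

/-- The cell `D_q(x) = [⌊qx⌋/q, (⌊qx⌋+1)/q)` of the partition `D_q` of `ℝ` containing `x`. -/
noncomputable def Dcell (q : ℕ) (x : ℝ) : Set ℝ :=
  Set.Ico ((⌊(q : ℝ) * x⌋ : ℝ) / q) (((⌊(q : ℝ) * x⌋ : ℝ) + 1) / q)

/-!
If the cell of `x` of size `m⁻ᵏ` is not contained in its cell of size `n⁻ᵏ`, then `x` lies
within `m⁻ᵏ` of an endpoint of the latter, so `T_nᵏ x = fract (nᵏ x)` lies within `(n/m)ᵏ`
of `{0, 1}`. As `ρ` does not charge `{0, 1}`, a bounded continuous function equal to `1`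
near `{0, 1}` can have arbitrarily small `ρ`-integral, and by genericity the frequency of
such `k` along the orbit of `μ`-a.e. `x` is at most that integral.
-/

section

open Metric BoundedContinuousFunction

lemma Tmap_iterate_succ (n : ℕ) (x : ℝ) (k : ℕ) :
    (Tmap n)^[k + 1] x = Int.fract ((n : ℝ) ^ (k + 1) * x) := by
  induction k with
  | zero => simp [Tmap]
  | succ k ih =>
    have hfract : (n : ℝ) * Int.fract ((n : ℝ) ^ (k + 1) * x)
        = (n : ℝ) ^ (k + 2) * x - ((n * ⌊(n : ℝ) ^ (k + 1) * x⌋ : ℤ) : ℝ) := by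
      rw [Int.fract]; push_cast; ring
    rw [Function.iterate_succ_apply', ih, Tmap, hfract, Int.fract_sub_intCast]

lemma mem_Dcell_iff {q : ℕ} (hq : 0 < q) {x y : ℝ} :
    y ∈ Dcell q x ↔ (⌊(q : ℝ) * x⌋ : ℝ) ≤ q * y ∧ q * y < ⌊(q : ℝ) * x⌋ + 1 := by
  have hq' : (0 : ℝ) < q := Nat.cast_pos.2 hq
  rw [Dcell, mem_Ico, div_le_iff₀ hq', lt_div_iff₀ hq', mul_comm y]

lemma abs_sub_lt_of_mem_Dcell {q : ℕ} (hq : 0 < q) {x y : ℝ} (hy : y ∈ Dcell q x) :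
    |(q : ℝ) * y - q * x| < 1 := by
  obtain ⟨hy₁, hy₂⟩ := (mem_Dcell_iff hq).1 hy
  have hx₁ := Int.floor_le ((q : ℝ) * x)
  have hx₂ := Int.lt_floor_add_one ((q : ℝ) * x)
  rw [abs_sub_lt_iff]
  constructor <;> linarith

lemma fract_mem_cthickening_of_not_subset_Dcell {p q : ℕ} (hq : 0 < q) {x : ℝ}
    (h : ¬ Dcell q x ⊆ Dcell p x) :
    Int.fract ((p : ℝ) * x) ∈ cthickening ((p : ℝ) / q) {0, 1} := by
  rcases p.eq_zero_or_pos with rfl | hp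
  · simp
  obtain ⟨y, hyq, hyp⟩ := not_subset.1 h
  have hp' : (0 : ℝ) < p := Nat.cast_pos.2 hp
  have hq' : (0 : ℝ) < q := Nat.cast_pos.2 hq
  have hyx : |(p : ℝ) * y - p * x| < p / q :=
    calc |(p : ℝ) * y - p * x| = p / q * |(q : ℝ) * y - q * x| := by
          rw [← mul_sub, ← mul_sub, abs_mul, abs_mul, abs_of_pos hp', abs_of_pos hq']
          field_simp
      _ < p / q := mul_lt_of_lt_one_right (by positivity) (abs_sub_lt_of_mem_Dcell hq hyq)
  have hfract : Int.fract ((p : ℝ) * x) = p * x - ⌊(p : ℝ) * x⌋ := rfl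
  rw [mem_Dcell_iff hp, not_and_or, not_le, not_lt] at hyp
  rw [abs_sub_lt_iff] at hyx
  rcases hyp with hlt | hge
  · refine mem_cthickening_of_dist_le _ 0 _ _ (mem_insert _ _) ?_
    rw [Real.dist_eq, sub_zero, abs_of_nonneg (Int.fract_nonneg _)]
    linarith
  · refine mem_cthickening_of_dist_le _ 1 _ _ (mem_insert_of_mem _ rfl) ?_
    rw [Real.dist_eq, abs_of_nonpos (by linarith [Int.fract_lt_one ((p : ℝ) * x)])]
    linarith

lemma Tmap_iterate_mem_cthickening {m n : ℕ} (hm : 0 < m) {x : ℝ} {k : ℕ}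
    (hk : ¬ Dcell (m ^ k) x ⊆ Dcell (n ^ k) x) :
    (Tmap n)^[k] x ∈ cthickening (((n : ℝ) / m) ^ k) {0, 1} := by
  obtain ⟨j, rfl⟩ : ∃ j, k = j + 1 :=
    Nat.exists_eq_add_one.2 (Nat.pos_of_ne_zero (by rintro rfl; simp at hk))
  have := fract_mem_cthickening_of_not_subset_Dcell (pow_pos hm (j + 1)) hk
  push_cast at this
  rwa [Tmap_iterate_succ, div_pow]

lemma exists_boundedContinuousFunction_one_le_on_cthickening {X : Type*} [PseudoMetricSpace X]
    [MeasurableSpace X] [OpensMeasurableSpace X] (ρ : Measure X) [IsFiniteMeasure ρ]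
    {F : Set X} (hF : IsClosed F) (hρF : ρ F = 0) {c : ℝ} (hc : 0 < c) :
    ∃ ε > 0, ∃ g : X →ᵇ ℝ, (∀ y, 0 ≤ g y) ∧ (∀ y ∈ cthickening ε F, 1 ≤ g y) ∧
      ∫ y, g y ∂ρ < c := by
  obtain ⟨r, hρr, hr⟩ : ∃ r, ρ (cthickening r F) < ENNReal.ofReal c ∧ 0 < r := by
    have hlim :=
      tendsto_measure_cthickening_of_isClosed (μ := ρ) ⟨1, one_pos, measure_ne_top _ _⟩ hF
    rw [hρF] at hlim
    exact (((hlim.mono_left nhdsWithin_le_nhds).eventually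
      (gt_mem_nhds (ENNReal.ofReal_pos.2 hc))).and (self_mem_nhdsWithin (s := Ioi 0))).exists
  have hε : 0 < r / 2 := half_pos hr
  let g : X →ᵇ ℝ :=
    (thickenedIndicator hε (cthickening (r / 2) F)).comp _ NNReal.isometry_coe.lipschitz
  have hg_le : ∀ y, g y ≤ (cthickening r F).indicator 1 y := by
    intro y
    by_cases hy : y ∈ cthickening r F
    · simpa [g, hy] using thickenedIndicator_le_one hε _ y
    · have hy' : y ∉ thickening (r / 2) (cthickening (r / 2) F) := fun h' =>
        hy (thickening_subset_cthickening _ _ (by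
          simpa using thickening_cthickening_subset _ hε.le F h'))
      simp [g, hy, thickenedIndicator_zero hε _ hy']
  refine ⟨r / 2, hε, g, fun y => NNReal.coe_nonneg _, fun y hy => ?_, ?_⟩
  · simp [g, thickenedIndicator_one hε _ hy]
  calc ∫ y, g y ∂ρ ≤ ∫ y, (cthickening r F).indicator 1 y ∂ρ :=
        integral_mono (g.integrable ρ)
          ((integrable_const 1).indicator isClosed_cthickening.measurableSet) hg_le
    _ = ρ.real (cthickening r F) :=
        integral_indicator_one isClosed_cthickening.measurableSet
    _ < c := ENNReal.toReal_lt_of_lt_ofReal hρr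

open Classical in
lemma card_filter_Icc_le_add_sum (S : Set ℕ) {u : ℕ → ℝ} (hu : ∀ k, 0 ≤ u k) {K : ℕ}
    (hS : ∀ k ∈ S, K ≤ k → 1 ≤ u k) (N : ℕ) :
    (((Finset.Icc 1 N).filter (fun k => k ∈ S)).card : ℝ) ≤
      K + 1 + ∑ k ∈ Finset.range N, u k := by
  set T := (Finset.range N).filter (fun k => K ≤ k ∧ k ∈ S)
  have hsub : (Finset.Icc 1 N).filter (fun k => k ∈ S) ⊆ Finset.range K ∪ {N} ∪ T := by
    intro k hk
    simp only [Finset.mem_filter, Finset.mem_Icc] at hk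
    simp only [T, Finset.mem_union, Finset.mem_range, Finset.mem_singleton, Finset.mem_filter]
    by_cases hkK : k < K
    · exact Or.inl (Or.inl hkK)
    by_cases hkN : k = N
    · exact Or.inl (Or.inr hkN)
    exact Or.inr ⟨by omega, by omega, hk.2⟩
  have hT : (T.card : ℝ) ≤ ∑ k ∈ Finset.range N, u k :=
    calc (T.card : ℝ) = ∑ k ∈ T, (1 : ℝ) := by simp
      _ ≤ ∑ k ∈ T, u k := Finset.sum_le_sum fun k hk =>
          hS k (Finset.mem_filter.1 hk).2.2 (Finset.mem_filter.1 hk).2.1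
      _ ≤ ∑ k ∈ Finset.range N, u k :=
          Finset.sum_le_sum_of_subset_of_nonneg (Finset.filter_subset _ _) fun k _ _ => hu k
  have hcard := (Finset.card_le_card hsub).trans <| (Finset.card_union_le _ _).trans <|
    Nat.add_le_add_right (Finset.card_union_le _ _) _
  rw [Finset.card_range, Finset.card_singleton] at hcard
  calc _ ≤ ((K + 1 + T.card : ℕ) : ℝ) := by exact_mod_cast hcard
    _ ≤ _ := by push_cast; linarith

open Classical in
lemma eventually_card_filter_Icc_div_lt (S : Set ℕ) {u : ℕ → ℝ} (hu : ∀ k, 0 ≤ u k) {K : ℕ}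
    (hS : ∀ k ∈ S, K ≤ k → 1 ≤ u k) {L c : ℝ}
    (hL : Tendsto (fun N : ℕ => (1 / N : ℝ) * ∑ k ∈ Finset.range N, u k) atTop (𝓝 L))
    (hLc : L < c) :
    ∀ᶠ N : ℕ in atTop, (((Finset.Icc 1 N).filter (fun k => k ∈ S)).card : ℝ) / N < c := by
  have hlim := (tendsto_const_div_atTop_nhds_zero_nat ((K : ℝ) + 1)).add hL
  rw [zero_add] at hlim
  filter_upwards [hlim.eventually_lt_const hLc] with N hN
  calc _ ≤ ((K : ℝ) + 1 + ∑ k ∈ Finset.range N, u k) / N := by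
        gcongr; exact card_filter_Icc_le_add_sum S hu hS N
    _ = _ := by ring
    _ < c := hN

open Classical in
lemma hasDensityZero_of_forall_eventually_lt (S : Set ℕ)
    (h : ∀ c > 0, ∀ᶠ N : ℕ in atTop,
      (((Finset.Icc 1 N).filter (fun k => k ∈ S)).card : ℝ) / N < c) :
    HasDensityZero S :=
  tendsto_order.2 ⟨fun _ ha => Eventually.of_forall fun _ => ha.trans_le (by positivity), h⟩

end

theorem density_zero_of_bad_cells_general
    (m n : ℕ) (hnm : n < m)
    (A : ℕ → Set ℝ) (hA : ∀ k, A k = {x : ℝ | ¬ Dcell (m ^ k) x ⊆ Dcell (n ^ k) x})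
    (μ : Measure ℝ)
    (ρ : Measure ℝ) [IsProbabilityMeasure ρ] (hρcont : ∀ y : ℝ, ρ {y} = 0)
    (hgen : PointwiseGeneric μ (Tmap n) ρ) :
    ∀ᵐ x ∂μ, HasDensityZero {k : ℕ | x ∈ A k} := by
  obtain rfl : A = _ := funext hA
  have hm : 0 < m := n.zero_le.trans_lt hnm
  have hρ01 : ρ {0, 1} = 0 := by rw [insert_eq]; exact measure_union_null (hρcont 0) (hρcont 1)
  have hratio : Tendsto (fun k : ℕ => ((n : ℝ) / m) ^ k) atTop (𝓝 0) :=
    tendsto_pow_atTop_nhds_zero_of_lt_one (by positivity)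
      ((div_lt_one (by positivity)).2 (by exact_mod_cast hnm))
  filter_upwards [hgen] with x hx
  refine hasDensityZero_of_forall_eventually_lt _ fun c hc => ?_
  obtain ⟨ε, hε, g, hg₀, hg₁, hgc⟩ := exists_boundedContinuousFunction_one_le_on_cthickening
    ρ (toFinite {(0 : ℝ), 1}).isClosed hρ01 hc
  obtain ⟨K, hK⟩ := eventually_atTop.1 (hratio.eventually (ge_mem_nhds hε))
  have hbad : ∀ k ∈ {k : ℕ | ¬ Dcell (m ^ k) x ⊆ Dcell (n ^ k) x}, K ≤ k →
      1 ≤ g ((Tmap n)^[k] x) := fun k hk hKk =>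
    hg₁ _ (Metric.cthickening_mono (hK k hKk) _ (Tmap_iterate_mem_cthickening hm hk))
  exact eventually_card_filter_Icc_div_lt _ (fun k => hg₀ _) hbad (hx g) hgc

/-- Claim 2.8 of the paper.  Let `m > n > 1`, and for `k ∈ ℕ` let
`A_k = {x : D_{m^k}(x) ⊄ D_{n^k}(x)}`.  If `μ` is a probability measure on `[0,1]`
pointwise generic under `T_n` for a continuous measure `ρ`, then for `μ`-a.e. `x` the
set of `k` with `x ∈ A_k` has density zero. -/
theorem density_zero_of_bad_cells
    (m n : ℕ) (hn : 1 < n) (hnm : n < m)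
    (A : ℕ → Set ℝ) (hA : ∀ k, A k = {x : ℝ | ¬ Dcell (m ^ k) x ⊆ Dcell (n ^ k) x})
    (μ : Measure ℝ) [IsProbabilityMeasure μ] (hμsupp : μ (Set.Icc (0:ℝ) 1)ᶜ = 0)
    (ρ : Measure ℝ) [IsProbabilityMeasure ρ] (hρcont : ∀ y : ℝ, ρ {y} = 0)
    (hgen : PointwiseGeneric μ (Tmap n) ρ) :
    ∀ᵐ x ∂μ, HasDensityZero {k : ℕ | x ∈ A k} :=
  density_zero_of_bad_cells_general m n hnm A hA μ ρ hρcont hgen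
end

section
/- Let m > n > 1 be integers. Let x ∈ [0,1] be a point that equidistributes under T_n for a continuous (non-atomic) measure ρ, and let D ⊆ [0,1] be an interval. Then the set of k ∈ ℕ such that T_n^k x lies outside the closure of D but dist(T_n^k x, ∂D) ≤ (n/m)^k has natural density zero. -/
open MeasureTheory Filter Set Topology
open scoped ENNReal

/-!
The boundary of an interval consists of at most two points, so it is null for a continuous `ρ`.
For `δ > 0`, equidistribution bounds the frequency of visits of the orbit to the closed
`δ`-neighbourhood of `∂D` by the `ρ`-measure of a slightly larger neighbourhood, which is small
for small `δ`. Since `(n/m)^k → 0`, all but finitely many of the times in question are such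
visits.
-/

open Metric
open scoped BoundedContinuousFunction

section OrdConnected

variable {α : Type*} [LinearOrder α] [TopologicalSpace α] [OrderTopology α] {s : Set α}

theorem Set.OrdConnected.frontier_subset_isGLB_union_isLUB (hs : s.OrdConnected) :
    frontier s ⊆ {z | IsGLB s z} ∪ {z | IsLUB s z} := by
  intro z hz
  have hz_closure : z ∈ closure s := frontier_subset_closure hz
  by_contra hz_bound
  simp only [mem_union, mem_ofPred_eq, not_or] at hz_bound
  obtain ⟨a, has, haz⟩ : ∃ a ∈ s, a < z := by
    by_contra! h
    exact hz_bound.1 (isGLB_of_mem_closure h hz_closure)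
  obtain ⟨b, hbs, hzb⟩ : ∃ b ∈ s, z < b := by
    by_contra! h
    exact hz_bound.2 (isLUB_of_mem_closure h hz_closure)
  exact hz.2 <| mem_interior_iff_mem_nhds.2 <|
    mem_of_superset (Icc_mem_nhds haz hzb) (hs.out has hbs)

theorem Set.OrdConnected.measure_frontier_eq_zero [MeasurableSpace α] (hs : s.OrdConnected)
    (μ : Measure α) [NullSingletonClass μ] : μ (frontier s) = 0 :=
  measure_mono_null hs.frontier_subset_isGLB_union_isLUB <| measure_union_null
    (Set.Subsingleton.measure_zero (fun _ ha _ hb => ha.unique hb) μ)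
    (Set.Subsingleton.measure_zero (fun _ ha _ hb => ha.unique hb) μ)

end OrdConnected

theorem Metric.mem_cthickening_of_infDist_le {X : Type*} [PseudoMetricSpace X] {E : Set X}
    {x : X} {δ : ℝ} (hE : E.Nonempty) (h : infDist x E ≤ δ) : x ∈ cthickening δ E := by
  rw [mem_cthickening_iff, ← ENNReal.ofReal_toReal (infEDist_ne_top hE)]
  exact ENNReal.ofReal_le_ofReal h

theorem HasDensityZero.mono {S T : Set ℕ} (hT : HasDensityZero T) (hST : S ⊆ T) :
    HasDensityZero S := by
  refine tendsto_of_tendsto_of_tendsto_of_le_of_le tendsto_const_nhds hT (fun N => by positivity)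
    fun N => ?_
  gcongr

open Classical in
theorem hasDensityZero_of_eventually_card_lt {S : Set ℕ}
    (h : ∀ ε > 0, ∀ᶠ N in atTop, (((Finset.range N).filter (· ∈ S)).card : ℝ) < ε * N) :
    HasDensityZero S := by
  rw [HasDensityZero, NormedAddGroup.tendsto_nhds_zero]
  intro ε hε
  filter_upwards [tendsto_add_atTop_nat 1 |>.eventually (h (ε / 2) (half_pos hε)),
    eventually_ge_atTop 1] with N hN hN1
  have hN_pos : (0 : ℝ) < N := by exact_mod_cast hN1
  have hIcc : (Finset.Icc 1 N).filter (· ∈ S) ⊆ (Finset.range (N + 1)).filter (· ∈ S) :=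
    Finset.filter_subset_filter _ fun k hk =>
      Finset.mem_range.2 (Nat.lt_succ_of_le (Finset.mem_Icc.1 hk).2)
  rw [Real.norm_eq_abs, abs_of_nonneg (by positivity), div_lt_iff₀ hN_pos]
  calc (((Finset.Icc 1 N).filter (· ∈ S)).card : ℝ)
      ≤ ((Finset.range (N + 1)).filter (· ∈ S)).card := by
        exact_mod_cast Finset.card_le_card hIcc
    _ < ε / 2 * (N + 1 : ℕ) := hN
    _ ≤ ε * N := by push_cast; nlinarith [(by exact_mod_cast hN1 : (1 : ℝ) ≤ N)]

theorem card_filter_range_le_add {p q : ℕ → Prop} [DecidablePred p] [DecidablePred q] {K : ℕ}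
    (h : ∀ k ≥ K, p k → q k) (N : ℕ) :
    ((Finset.range N).filter p).card ≤ K + ((Finset.range N).filter q).card := by
  calc ((Finset.range N).filter p).card
      ≤ (Finset.range K ∪ (Finset.range N).filter q : Finset ℕ).card := by
        refine Finset.card_le_card fun k hk => ?_
        rw [Finset.mem_filter] at hk
        rw [Finset.mem_union, Finset.mem_range, Finset.mem_filter]
        by_cases hkK : k < K
        · exact Or.inl hkK
        · exact Or.inr ⟨hk.1, h k (not_lt.1 hkK) hk.2⟩
    _ ≤ K + ((Finset.range N).filter q).card := by
        simpa only [Finset.card_range] using Finset.card_union_le (Finset.range K) _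

theorem exists_pos_measure_thickening_cthickening_lt {X : Type*} [PseudoMetricSpace X]
    [MeasurableSpace X] [OpensMeasurableSpace X] {ρ : Measure X} [IsFiniteMeasure ρ] {F : Set X}
    (hF : IsClosed F) (hρF : ρ F = 0) {ε : ℝ≥0∞} (hε : 0 < ε) :
    ∃ δ > 0, ρ (thickening δ (cthickening δ F)) < ε := by
  have hsmall : ∀ᶠ t in 𝓝 (0 : ℝ), ρ (cthickening t F) < ε :=
    (tendsto_measure_cthickening_of_isClosed ⟨1, one_pos, measure_ne_top ρ _⟩ hF)
      |>.eventually_lt_const (hρF ▸ hε)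
  have hdouble : Tendsto (fun δ : ℝ => δ + δ) (𝓝[>] 0) (𝓝 0) := by
    simpa using (tendsto_id.add tendsto_id).mono_left (nhdsWithin_le_nhds (a := (0 : ℝ)))
  obtain ⟨δ, hδρ, hδ⟩ := ((hdouble.eventually hsmall).and self_mem_nhdsWithin).exists
  refine ⟨δ, hδ, (measure_mono ?_).trans_lt hδρ⟩
  exact (thickening_cthickening_subset δ hδ.le F).trans (thickening_subset_cthickening _ _)

section Equidistribution

variable {X : Type*} [PseudoMetricSpace X] [MeasurableSpace X] {y : ℕ → X} {ρ : Measure X}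

def IsEquidistributed (y : ℕ → X) (ρ : Measure X) : Prop :=
  ∀ f : X →ᵇ ℝ, Tendsto (fun N : ℕ => (1 / N : ℝ) * ∑ k ∈ Finset.range N, f (y k)) atTop
    (𝓝 (∫ z, f z ∂ρ))

open Classical in
theorem IsEquidistributed.eventually_card_visits_lt (hy : IsEquidistributed y ρ) {C : Set X}
    {δ ε : ℝ} (hδ : 0 < δ) (hC : ρ (thickening δ C) < ENNReal.ofReal ε) :
    ∀ᶠ N in atTop, (((Finset.range N).filter (fun k => y k ∈ C)).card : ℝ) < ε * N := by
  set g : X →ᵇ ℝ := BoundedContinuousFunction.comp _ NNReal.isometry_coe.lipschitz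
    (thickenedIndicator hδ C)
  have hg_apply (z : X) : g z = thickenedIndicator hδ C z := rfl
  have hg_int : ∫ z, g z ∂ρ < ε := by
    have hle := integral_le_measure (μ := ρ) (s := thickening δ C)
      (fun z _ => NNReal.coe_le_one.2 (thickenedIndicator_le_one hδ C z))
      (fun z hz => by rw [thickenedIndicator_zero hδ C hz, NNReal.coe_zero])
    exact (ENNReal.ofReal_lt_ofReal_iff'.1 (hle.trans_lt hC)).1
  filter_upwards [(hy g).eventually_lt_const hg_int, eventually_gt_atTop 0] with N hN hN0
  have hN_pos : (0 : ℝ) < N := by exact_mod_cast hN0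
  rw [one_div, inv_mul_lt_iff₀ hN_pos] at hN
  calc (((Finset.range N).filter (fun k => y k ∈ C)).card : ℝ)
      = ∑ k ∈ Finset.range N, if y k ∈ C then (1 : ℝ) else 0 :=
        Finset.natCast_card_filter _ _
    _ ≤ ∑ k ∈ Finset.range N, g (y k) := by
        gcongr with k
        split_ifs with hk
        · rw [hg_apply, thickenedIndicator_one hδ C hk, NNReal.coe_one]
        · exact NNReal.coe_nonneg _
    _ < ε * N := by linarith

open Classical in
theorem IsEquidistributed.hasDensityZero_mem_cthickening [OpensMeasurableSpace X]
    [IsFiniteMeasure ρ] (hy : IsEquidistributed y ρ) {F : Set X} (hF : IsClosed F)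
    (hρF : ρ F = 0) {r : ℕ → ℝ} (hr : Tendsto r atTop (𝓝 0)) :
    HasDensityZero {k | y k ∈ cthickening (r k) F} := by
  refine hasDensityZero_of_eventually_card_lt fun ε hε => ?_
  obtain ⟨δ, hδ, hδρ⟩ := exists_pos_measure_thickening_cthickening_lt hF hρF
    (ENNReal.ofReal_pos.2 (half_pos hε))
  obtain ⟨K, hK⟩ := eventually_atTop.1 (hr.eventually_le_const hδ)
  have hcount := card_filter_range_le_add (p := (· ∈ {k | y k ∈ cthickening (r k) F}))
    (q := fun k => y k ∈ cthickening δ F) fun k hk hkS => cthickening_mono (hK k hk) F hkS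
  filter_upwards [hy.eventually_card_visits_lt hδ hδρ,
    (tendsto_const_div_atTop_nhds_zero_nat (K : ℝ)).eventually_lt_const (half_pos hε),
    eventually_gt_atTop 0] with N hvisits hK_small hN0
  have hN_pos : (0 : ℝ) < N := by exact_mod_cast hN0
  rw [div_lt_iff₀ hN_pos] at hK_small
  calc _ ≤ (K : ℝ) + ((Finset.range N).filter fun k => y k ∈ cthickening δ F).card := by
        exact_mod_cast hcount N
    _ < ε * N := by linarith

end Equidistribution

theorem density_zero_of_near_boundary_times_general
    (m n : ℕ) (hnm : n < m)
    (ρ : Measure ℝ) [IsProbabilityMeasure ρ] (hρcont : ∀ y : ℝ, ρ {y} = 0)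
    (x : ℝ)
    (hxgen : ∀ f : BoundedContinuousFunction ℝ ℝ,
      Tendsto (fun N : ℕ => (1 / N : ℝ) * ∑ k ∈ Finset.range N, f ((Tmap n)^[k] x)) atTop
        (𝓝 (∫ y, f y ∂ρ)))
    (D : Set ℝ) (hD : D.OrdConnected) (hDne : D.Nonempty) :
    HasDensityZero {k : ℕ | (Tmap n)^[k] x ∉ closure D ∧
      Metric.infDist ((Tmap n)^[k] x) (frontier D) ≤ ((n : ℝ) / m) ^ k} := by
  have : NullSingletonClass ρ := ⟨hρcont⟩
  have hm_pos : (0 : ℝ) < m := by exact_mod_cast n.zero_le.trans_lt hnm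
  have hratio : Tendsto (fun k : ℕ => ((n : ℝ) / m) ^ k) atTop (𝓝 0) :=
    tendsto_pow_atTop_nhds_zero_of_lt_one (by positivity)
      ((div_lt_one hm_pos).2 (by exact_mod_cast hnm))
  refine (IsEquidistributed.hasDensityZero_mem_cthickening (y := fun k => (Tmap n)^[k] x) hxgen
    isClosed_frontier (hD.measure_frontier_eq_zero ρ) hratio).mono ?_
  rintro k ⟨hk_outside, hk_near⟩
  have hD_ne_univ : D ≠ univ := fun h => hk_outside (by simp [h])
  exact mem_cthickening_of_infDist_le (nonempty_frontier_iff.2 ⟨hDne, hD_ne_univ⟩) hk_near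

/-- Lemma 2.9 of the paper.  Let `m > n > 1` and let `x ∈ [0,1]`
equidistribute under `T_n` for a continuous measure `ρ`.  If `D ⊆ [0,1]` is a (nonempty)
interval, then the set of `k` such that `T_n^k x` lies outside the closure of `D` but
within distance `(n/m)^k` of `∂D` has density zero. -/
theorem density_zero_of_near_boundary_times
    (m n : ℕ) (hn : 1 < n) (hnm : n < m)
    (ρ : Measure ℝ) [IsProbabilityMeasure ρ] (hρcont : ∀ y : ℝ, ρ {y} = 0)
    (x : ℝ) (hx : x ∈ Set.Icc (0:ℝ) 1)
    (hxgen : ∀ f : BoundedContinuousFunction ℝ ℝ,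
      Tendsto (fun N : ℕ => (1 / N : ℝ) * ∑ k ∈ Finset.range N, f ((Tmap n)^[k] x)) atTop
        (𝓝 (∫ y, f y ∂ρ)))
    (D : Set ℝ) (hD : D.OrdConnected) (hDne : D.Nonempty) (hDsub : D ⊆ Set.Icc (0:ℝ) 1) :
    HasDensityZero {k : ℕ | (Tmap n)^[k] x ∉ closure D ∧
      Metric.infDist ((Tmap n)^[k] x) (frontier D) ≤ ((n : ℝ) / m) ^ k} :=
  density_zero_of_near_boundary_times_general m n hnm ρ hρcont x hxgen D hD hDne
end

section
/- Let n ≥ 2 and k ≥ 1 be integers, set x₀ = 1/(n^{2k} − 1) and x₁ = n^k/(n^{2k} − 1), regarded as points of the circle 𝕋 = ℝ/ℤ, and let α = (1/2)δ_{x₀} + (1/2)δ_{x₁}. Then {x₀, x₁} is a periodic orbit of T_{n^k} (so α is T_{n^k}-invariant), and for every integer j with 0 < 2|j| < n^k + 1, the Fourier coefficient α̂(j) = ∫ e^{2πijx} dα(x) is non-zero. -/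
open MeasureTheory Filter Set Topology
open scoped ENNReal

/-! With `N = n^k` and `D = N² - 1`, multiplication by `N` sends `1/D` to `N/D` and `N/D` to
`N²/D = 1 + 1/D ≡ 1/D`, so `α` is the uniform measure on a 2-cycle and is invariant.
Its `j`-th Fourier coefficient is `(e(j x₀) + e(j x₁))/2 = e(j x₀)(1 + e(j/(N+1)))/2`, because
`x₁ - x₀ = (N - 1)/D = 1/(N+1)`. It vanishes only if `e(j/(N+1)) = -1`, i.e. `2j` is an odd
multiple of `N + 1`, which `0 < 2|j| < N + 1` rules out. -/

theorem integral_smul_dirac_add_smul_dirac {X E : Type*} [MeasurableSpace X]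
    [MeasurableSingletonClass X] [NormedAddCommGroup E] [NormedSpace ℝ E] [CompleteSpace E]
    (f : X → E) {c d : ℝ≥0∞} (hc : c ≠ ∞) (hd : d ≠ ∞) (a b : X) :
    ∫ x, f x ∂(c • Measure.dirac a + d • Measure.dirac b) =
      c.toReal • f a + d.toReal • f b := by
  rw [integral_add_measure ((integrable_dirac enorm_lt_top).smul_measure hc)
    ((integrable_dirac enorm_lt_top).smul_measure hd), integral_smul_measure,
    integral_smul_measure, integral_dirac, integral_dirac]

theorem Measure.map_smul_dirac_add_smul_dirac_of_swap {X : Type*} [MeasurableSpace X]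
    {f : X → X} (hf : Measurable f) {a b : X} (hab : f a = b) (hba : f b = a) (c : ℝ≥0∞) :
    (c • Measure.dirac a + c • Measure.dirac b).map f =
      c • Measure.dirac a + c • Measure.dirac b := by
  rw [Measure.map_add _ _ hf, Measure.map_smul, Measure.map_smul, Measure.map_dirac' hf,
    Measure.map_dirac' hf, hab, hba, add_comm]

theorem Int.two_mul_ne_odd_mul {j m : ℤ} {M : ℕ} (hj : 2 * |j| < M) :
    2 * j ≠ (2 * m + 1) * M := by
  intro h
  have hodd : 1 ≤ |2 * m + 1| := Int.one_le_abs (by omega)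
  have habs := congrArg abs h
  rw [abs_mul, abs_mul, abs_two, Nat.abs_cast] at habs
  nlinarith

theorem fourier_coe_one_div_ne_neg_one {j : ℤ} {M : ℕ} (hj : 2 * |j| < M) :
    fourier j ((1 / M : ℝ) : UnitAddCircle) ≠ -1 := by
  have hM : (M : ℂ) ≠ 0 := by exact_mod_cast (show M ≠ 0 by have := abs_nonneg j; omega)
  rw [fourier_coe_apply, ← Complex.exp_pi_mul_I, Ne, Complex.exp_eq_exp_iff_exists_int]
  rintro ⟨m, hm⟩
  apply Int.two_mul_ne_odd_mul (m := m) hj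
  push_cast at hm
  field_simp at hm
  exact_mod_cast (by linear_combination hm : (2 * j : ℂ) = (2 * m + 1) * M)

theorem fourier_apply_add {T : ℝ} (j : ℤ) (x y : AddCircle T) :
    fourier j (x + y) = fourier j x * fourier j y := by
  rw [fourier_apply, fourier_apply, fourier_apply, zsmul_add, AddCircle.toCircle_add,
    Circle.coe_mul]

section TwoCycle

variable {N : ℕ}

theorem cast_sq_sub_one_ne_zero (hN : N ≠ 1) : (N : ℝ) ^ 2 - 1 ≠ 0 := by
  rw [sub_ne_zero, ← Nat.cast_pow, Nat.cast_ne_one, Ne, Nat.pow_eq_one]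
  omega

theorem nsmul_coe_one_div_sq_sub_one (N : ℕ) :
    N • ((1 / ((N : ℝ) ^ 2 - 1) : ℝ) : UnitAddCircle) =
      ((N / ((N : ℝ) ^ 2 - 1) : ℝ) : _) := by
  rw [← AddCircle.coe_nsmul, nsmul_eq_mul, mul_one_div]

theorem nsmul_coe_div_sq_sub_one (hN : N ≠ 1) :
    N • ((N / ((N : ℝ) ^ 2 - 1) : ℝ) : UnitAddCircle) =
      ((1 / ((N : ℝ) ^ 2 - 1) : ℝ) : _) := by
  have hD := cast_sq_sub_one_ne_zero hN
  have h : (N • (N / ((N : ℝ) ^ 2 - 1)) : ℝ) = 1 / ((N : ℝ) ^ 2 - 1) + 1 := by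
    rw [nsmul_eq_mul]
    field_simp
    ring
  rw [← AddCircle.coe_nsmul, h, AddCircle.coe_add, AddCircle.coe_period, add_zero]

theorem coe_div_sq_sub_one_eq_add (hN : N ≠ 1) :
    ((N / ((N : ℝ) ^ 2 - 1) : ℝ) : UnitAddCircle) =
      ((1 / ((N : ℝ) ^ 2 - 1) : ℝ) : _) + ((1 / ((N + 1 : ℕ) : ℝ) : ℝ) : _) := by
  have hD := cast_sq_sub_one_ne_zero hN
  have hN1 : (N : ℝ) + 1 ≠ 0 := by positivity
  rw [← AddCircle.coe_add]
  congr 1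
  push_cast
  field_simp
  ring

theorem fourier_add_fourier_two_cycle_ne_zero (hN : N ≠ 1) {j : ℤ} (hj : 2 * |j| < N + 1) :
    fourier j ((1 / ((N : ℝ) ^ 2 - 1) : ℝ) : UnitAddCircle) +
      fourier j ((N / ((N : ℝ) ^ 2 - 1) : ℝ) : UnitAddCircle) ≠ 0 := by
  rw [coe_div_sq_sub_one_eq_add hN, fourier_apply_add, ← mul_one_add]
  refine mul_ne_zero (Circle.coe_ne_zero _) fun h => ?_
  exact fourier_coe_one_div_ne_neg_one (by exact_mod_cast hj) (eq_neg_of_add_eq_zero_right h)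

end TwoCycle

/-- the measure `α` used in Claim 3.4 of the paper.  For integers
`n ≥ 2` and `k ≥ 1`, let `x₀ = 1/(n^{2k} − 1)` and `x₁ = n^k/(n^{2k} − 1)` on the circle
`𝕋 = ℝ/ℤ`, and let `α = (1/2)δ_{x₀} + (1/2)δ_{x₁}`.  Then `{x₀, x₁}` is a periodic orbit
of `T_{n^k}` (so `α` is `T_{n^k}`-invariant), and for every integer `j` with
`0 < 2|j| < n^k + 1` the Fourier coefficient `α̂(j) = ∫ e^{2πijx} dα(x)` is non-zero. -/
theorem periodic_orbit_measure_fourier_nonvanishing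
    (n k : ℕ) (hn : 2 ≤ n) (hk : 1 ≤ k)
    (x₀ x₁ : UnitAddCircle)
    (hx₀ : x₀ = ((1 / ((n : ℝ) ^ (2 * k) - 1) : ℝ) : UnitAddCircle))
    (hx₁ : x₁ = (((n : ℝ) ^ k / ((n : ℝ) ^ (2 * k) - 1) : ℝ) : UnitAddCircle))
    (α : Measure UnitAddCircle)
    (hα : α = (1 / 2 : ℝ≥0∞) • Measure.dirac x₀ + (1 / 2 : ℝ≥0∞) • Measure.dirac x₁) :
    (n ^ k • x₀ = x₁ ∧ n ^ k • x₁ = x₀) ∧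
    α.map (fun x : UnitAddCircle => n ^ k • x) = α ∧
    ∀ j : ℤ, j ≠ 0 → 2 * |j| < n ^ k + 1 → (∫ x, fourier j x ∂α) ≠ 0 := by
  have hN : n ^ k ≠ 1 := by rw [Ne, Nat.pow_eq_one]; omega
  have hsq : (n : ℝ) ^ (2 * k) = ((n ^ k : ℕ) : ℝ) ^ 2 := by push_cast; ring
  rw [hsq] at hx₀ hx₁
  rw [← Nat.cast_pow] at hx₁
  have h01 : n ^ k • x₀ = x₁ := hx₀ ▸ hx₁ ▸ nsmul_coe_one_div_sq_sub_one _
  have h10 : n ^ k • x₁ = x₀ := hx₀ ▸ hx₁ ▸ nsmul_coe_div_sq_sub_one hN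
  refine ⟨⟨h01, h10⟩, hα ▸ Measure.map_smul_dirac_add_smul_dirac_of_swap
    (continuous_const_smul _).measurable h01 h10 _, fun j _ hj => ?_⟩
  rw [hα, integral_smul_dirac_add_smul_dirac _ (by simp) (by simp), ← smul_add, hx₀, hx₁]
  exact smul_ne_zero (by norm_num)
    (fourier_add_fourier_two_cycle_ne_zero hN (by exact_mod_cast hj))
end

section
/- Let m ≥ 2 be an integer and let β be the Cantor–Lebesgue measure in base m with weights (1/3, 2/3), i.e. the law of the random sum ∑_{k=1}^∞ X_k·m^{-k} where (X_k) are i.i.d. random variables with P(X_k = 0) = 1/3 and P(X_k = 1) = 2/3, regarded as a Borel probability measure on the circle 𝕋 = ℝ/ℤ. Then for every integer i, the Fourier coefficient β̂(i) = ∫ e^{2πiix} dβ(x) is non-zero. -/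
/-!
By independence, the `i`-th Fourier coefficient of the partial sum `Sₙ = ∑_{k<n} Xₖ m^{-(k+1)}`
is `∏_{k<n} φ(2π i / m^{k+1})`, where `φ(θ) = 1/3 + 2/3 e^{iθ}` is the characteristic function of
one digit, and dominated convergence makes `β̂(i)` the limit of these products. Because the two
weights differ, `|φ(θ)| ≥ 2/3 - 1/3 > 0`; and `|φ(θ) - 1| ≤ |θ|` is summable along
`θ = 2π i / m^{k+1}`. An infinite product of nonzero factors with `∑ |φₖ - 1| < ∞` is nonzero.
-/

open MeasureTheory Filter Topology ProbabilityTheory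
open scoped ENNReal

lemma ne_zero_of_tendsto_prod_range {R : Type*} [NormedCommRing R] [NormOneClass R]
    [NormMulClass R] [CompleteSpace R] {f : ℕ → R} {a : R} (hf : ∀ k, f k ≠ 0)
    (hs : Summable fun k ↦ ‖f k - 1‖)
    (ha : Tendsto (fun n ↦ ∏ k ∈ Finset.range n, f k) atTop (𝓝 a)) : a ≠ 0 := by
  have hf' : f = fun k ↦ 1 + (f k - 1) := by simp
  rw [hf'] at hf ha
  rw [tendsto_nhds_unique ha (multipliable_one_add_of_summable hs).hasProd.tendsto_prod_nat]
  exact tprod_one_add_ne_zero_of_summable hf hs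

lemma summable_div_pow_succ (c : ℝ) {m : ℝ} (hm : 1 < m) :
    Summable fun k : ℕ ↦ c / m ^ (k + 1) := by
  refine ((summable_geometric_of_lt_one (inv_nonneg.2 (by linarith))
    (inv_lt_one_of_one_lt₀ hm)).mul_left (c / m)).congr fun k ↦ ?_
  rw [inv_pow, pow_succ]
  field_simp

lemma summable_div_pow_succ_of_abs_le {d : ℕ → ℝ} {C : ℝ} (hd : ∀ k, |d k| ≤ C) {m : ℝ}
    (hm : 1 < m) : Summable fun k : ℕ ↦ d k / m ^ (k + 1) := by
  refine (summable_div_pow_succ C hm).of_norm_bounded fun k ↦ ?_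
  rw [norm_div, norm_pow, Real.norm_eq_abs, Real.norm_eq_abs, abs_of_pos (by linarith : 0 < m)]
  exact div_le_div_of_nonneg_right (hd k) (by positivity)

lemma fourier_coe_sum {T : ℝ} {ι : Type*} (n : ℤ) (s : Finset ι) (x : ι → ℝ) :
    fourier n ((∑ k ∈ s, x k : ℝ) : AddCircle T) =
      ∏ k ∈ s, fourier n (x k : AddCircle T) := by
  simp only [fourier_coe_apply, Complex.ofReal_sum, Finset.mul_sum, Finset.sum_div,
    Complex.exp_sum]

lemma norm_fourier_apply {T : ℝ} (n : ℤ) (x : AddCircle T) : ‖fourier n x‖ = 1 := by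
  rw [fourier_apply]
  exact Circle.norm_coe _

lemma ProbabilityTheory.iIndepFun.integral_finset_prod_comp {Ω ι 𝓧 𝕜 : Type*}
    [MeasurableSpace Ω] {μ : Measure Ω} [MeasurableSpace 𝓧] [RCLike 𝕜] {X : ι → Ω → 𝓧}
    (hX : iIndepFun X μ) (mX : ∀ k, AEMeasurable (X k) μ) {f : ι → 𝓧 → 𝕜} (hf : ∀ k, AEStronglyMeasurable (f k) (μ.map (X k))) (s : Finset ι) :
    ∫ ω, ∏ k ∈ s, f k (X k ω) ∂μ = ∏ k ∈ s, ∫ ω, f k (X k ω) ∂μ := by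
  simp_rw [← Finset.prod_coe_sort s]
  exact (hX.precomp (Subtype.val_injective (p := (· ∈ s)))).integral_fun_prod_comp
    (X := fun k : s ↦ X k) (fun k ↦ mX k) (f := fun k ↦ f k) (fun k ↦ hf k)

lemma tendsto_integral_comp_of_ae_tendsto {Ω E G : Type*} [MeasurableSpace Ω] {μ : Measure Ω}
    [IsFiniteMeasure μ] [TopologicalSpace E] [TopologicalSpace.PseudoMetrizableSpace E]
    [MeasurableSpace E] [BorelSpace E] [NormedAddCommGroup G] [NormedSpace ℝ G]
    [SecondCountableTopology G] [MeasurableSpace G] [BorelSpace G]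
    {g : E → G} (hg : Continuous g) {C : ℝ} (hC : ∀ x, ‖g x‖ ≤ C) {F : ℕ → Ω → E} {f : Ω → E}
    (hF : ∀ n, AEMeasurable (F n) μ) (hlim : ∀ᵐ ω ∂μ, Tendsto (fun n ↦ F n ω) atTop (𝓝 (f ω))) :
    Tendsto (fun n ↦ ∫ ω, g (F n ω) ∂μ) atTop (𝓝 (∫ x, g x ∂μ.map f)) := by
  rw [integral_map (aemeasurable_of_tendsto_metrizable_ae' hF hlim) hg.aestronglyMeasurable]
  refine tendsto_integral_of_dominated_convergence (fun _ ↦ C)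
    (fun n ↦ (hg.measurable.comp_aemeasurable (hF n)).aestronglyMeasurable) (integrable_const C)
    (fun n ↦ .of_forall fun ω ↦ hC _) ?_
  filter_upwards [hlim] with ω hω
  exact (hg.tendsto _).comp hω

namespace CantorLebesgue

noncomputable def digitLaw : Measure ℝ :=
  (1 / 3 : ℝ≥0∞) • Measure.dirac 0 + (2 / 3 : ℝ≥0∞) • Measure.dirac 1

noncomputable def digitCharFun (θ : ℝ) : ℂ := 1 / 3 + 2 / 3 * Complex.exp (Complex.I * θ)

lemma ae_digitLaw : ∀ᵐ t ∂digitLaw, t = 0 ∨ t = 1 :=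
  ae_add_measure_iff.2
    ⟨Measure.ae_smul_measure ((ae_eq_dirac id).mono fun _ ↦ .inl) _,
     Measure.ae_smul_measure ((ae_eq_dirac id).mono fun _ ↦ .inr) _⟩

lemma integral_digitLaw (g : ℝ → ℂ) : ∫ t, g t ∂digitLaw = 1 / 3 * g 0 + 2 / 3 * g 1 := by
  have hg : ∀ a : ℝ, Integrable g (Measure.dirac a) := fun a ↦
    (integrable_const (g a)).congr (ae_eq_dirac g).symm
  rw [digitLaw, integral_add_measure ((hg 0).smul_measure (by finiteness))
    ((hg 1).smul_measure (by finiteness)), integral_smul_measure, integral_smul_measure,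
    integral_dirac, integral_dirac]
  simp [ENNReal.toReal_div, Complex.real_smul]

lemma integral_fourier_coe_div_digitLaw (i : ℤ) (c : ℝ) :
    ∫ t, fourier i ((t / c : ℝ) : UnitAddCircle) ∂digitLaw =
      digitCharFun (2 * Real.pi * i / c) := by
  rw [integral_digitLaw, digitCharFun, fourier_coe_apply, fourier_coe_apply]
  push_cast
  rw [zero_div, mul_zero, zero_div, Complex.exp_zero]
  ring_nf

lemma one_third_le_norm_digitCharFun (θ : ℝ) : 1 / 3 ≤ ‖digitCharFun θ‖ := by
  have h := norm_sub_norm_le (2 / 3 * Complex.exp (Complex.I * θ)) (-(1 / 3))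
  rw [sub_neg_eq_add, add_comm, norm_mul, Complex.norm_exp_I_mul_ofReal, norm_neg] at h
  norm_num at h
  unfold digitCharFun
  linarith

lemma digitCharFun_ne_zero (θ : ℝ) : digitCharFun θ ≠ 0 :=
  norm_pos_iff.1 <| (by norm_num : (0 : ℝ) < 1 / 3).trans_le (one_third_le_norm_digitCharFun θ)

lemma norm_digitCharFun_sub_one_le (θ : ℝ) : ‖digitCharFun θ - 1‖ ≤ |θ| := by
  have h : digitCharFun θ - 1 = 2 / 3 * (Complex.exp (Complex.I * θ) - 1) := by
    unfold digitCharFun; ring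
  have hexp := Real.norm_exp_I_mul_ofReal_sub_one_le (x := θ)
  rw [Real.norm_eq_abs] at hexp
  rw [h, norm_mul]
  norm_num
  linarith [norm_nonneg (Complex.exp (Complex.I * θ) - 1)]

lemma summable_norm_digitCharFun_sub_one {a : ℕ → ℝ} (ha : Summable a) :
    Summable fun k ↦ ‖digitCharFun (a k) - 1‖ :=
  .of_nonneg_of_le (fun _ ↦ norm_nonneg _) (fun k ↦ norm_digitCharFun_sub_one_le (a k)) ha.abs

lemma integral_fourier_coe_sum_div {Ω ι : Type*} [MeasurableSpace Ω] {μ : Measure Ω}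
    {X : ι → Ω → ℝ} (hXmeas : ∀ k, AEMeasurable (X k) μ) (hXindep : iIndepFun X μ)
    (hXdist : ∀ k, μ.map (X k) = digitLaw) (c : ι → ℝ) (i : ℤ) (s : Finset ι) :
    ∫ ω, fourier i ((∑ k ∈ s, X k ω / c k : ℝ) : UnitAddCircle) ∂μ =
      ∏ k ∈ s, digitCharFun (2 * Real.pi * i / c k) := by
  simp_rw [fourier_coe_sum]
  rw [hXindep.integral_finset_prod_comp hXmeas
    (f := fun k t ↦ fourier i ((t / c k : ℝ) : UnitAddCircle))
    (fun k ↦ (by fun_prop : Continuous _).aestronglyMeasurable)]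
  refine Finset.prod_congr rfl fun k _ ↦ ?_
  rw [← integral_fourier_coe_div_digitLaw, ← hXdist k,
    integral_map (hXmeas k) (by fun_prop : Continuous _).aestronglyMeasurable]

end CantorLebesgue

open CantorLebesgue in
/-- Let `m ≥ 2` and let `β` be the Cantor–Lebesgue measure in base `m`
with weights `(1/3, 2/3)`, i.e. the law (on the circle `𝕋 = ℝ/ℤ`) of the random sum
`∑_{k≥1} X_k m^{-k}` for i.i.d. digits `X_k` with `P(X_k = 0) = 1/3`, `P(X_k = 1) = 2/3`.
Then every Fourier coefficient `β̂(i) = ∫ e^{2πiix} dβ(x)` is non-zero. -/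
theorem cantor_lebesgue_fourier_nonvanishing
    (m : ℕ) (hm : 2 ≤ m)
    (Ω : Type) [MeasurableSpace Ω] (μΩ : Measure Ω) [IsProbabilityMeasure μΩ]
    (X : ℕ → Ω → ℝ) (hXmeas : ∀ k, Measurable (X k))
    (hXindep : iIndepFun X μΩ)
    (hXdist : ∀ k, μΩ.map (X k) =
      (1 / 3 : ℝ≥0∞) • Measure.dirac (0 : ℝ) + (2 / 3 : ℝ≥0∞) • Measure.dirac (1 : ℝ))
    (β : Measure UnitAddCircle)
    (hβ : β = μΩ.map (fun ω => ((∑' k : ℕ, X k ω / (m : ℝ) ^ (k + 1) : ℝ) : UnitAddCircle))) :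
    ∀ i : ℤ, (∫ x, fourier i x ∂β) ≠ 0 := by
  have hdigit : ∀ k, μΩ.map (X k) = digitLaw := hXdist
  intro i
  have hm1 : (1 : ℝ) < m := by exact_mod_cast hm
  have hdigits : ∀ᵐ ω ∂μΩ, ∀ k, |X k ω| ≤ 1 := ae_all_iff.2 fun k ↦
    (ae_of_ae_map (hXmeas k).aemeasurable ((hdigit k).symm ▸ ae_digitLaw)).mono fun ω h ↦ by
      rcases h with h | h <;> simp [h]
  have hlim : Tendsto (fun n ↦ ∏ k ∈ Finset.range n, digitCharFun (2 * Real.pi * i / m ^ (k + 1)))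
      atTop (𝓝 (∫ x, fourier i x ∂β)) := by
    simp_rw [hβ, ← integral_fourier_coe_sum_div (fun k ↦ (hXmeas k).aemeasurable) hXindep hdigit]
    refine tendsto_integral_comp_of_ae_tendsto (map_continuous _)
      (fun x ↦ (norm_fourier_apply i x).le) (fun n ↦ by fun_prop) (hdigits.mono fun ω hω ↦ ?_)
    exact (AddCircle.continuous_mk' 1).continuousAt.tendsto.comp
      (summable_div_pow_succ_of_abs_le hω hm1).hasSum.tendsto_sum_nat
  exact ne_zero_of_tendsto_prod_range (fun _ ↦ digitCharFun_ne_zero _)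
    (summable_norm_digitCharFun_sub_one (summable_div_pow_succ _ hm1)) hlim
end
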